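/- arXiv:1202.4302 — 7 statements merged into one kernel-verified Lean document; each statement's English description precedes it below -/
import Mathlib

section
/- Let k ≥ 2 be an integer, 0 < a ≤ 1 real, and let f(z) = (k/(k+1))·a·z^(k+1) − (1+z)^k + b where b = (1+z₀)^(k−1)·(1 + z₀/(k+1)) and z₀ is the unique positive root of a·z^k = (1+z)^(k−1). Then f(z) ≥ 0 for all z > 0. -/
/-!
The derivative of `f` is `k (a z^k - (1+z)^(k-1))`. Since `z ↦ (1+z)^(k-1) / z^k` is decreasing
on `(0, ∞)` and equals `a` at `z₀`, this derivative is `≤ 0` on `(0, z₀)` and `≥ 0` on `(z₀, ∞)`,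
so `f` attains its minimum over `(0, ∞)` at `z₀`. Finally `f z₀ = 0`, because the root equation
gives `a z₀^(k+1) = z₀ (1+z₀)^(k-1)`.
-/

open Set

/-- The antitonicity of `z ↦ (1+z)^k / z^(k+1)`, cross-multiplied. -/
lemma pow_succ_mul_one_add_pow_le_of_le {x y : ℝ} (hx : 0 ≤ x) (hxy : x ≤ y) (k : ℕ) :
    x ^ (k + 1) * (1 + y) ^ k ≤ y ^ (k + 1) * (1 + x) ^ k := by
  have hy : 0 ≤ y := hx.trans hxy
  have hcross : x * (1 + y) ≤ y * (1 + x) := by linarith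
  calc x ^ (k + 1) * (1 + y) ^ k = (x * (1 + y)) ^ k * x := by rw [mul_pow, pow_succ]; ring
    _ ≤ (y * (1 + x)) ^ k * y := by gcongr
    _ = y ^ (k + 1) * (1 + x) ^ k := by rw [mul_pow, pow_succ]; ring

lemma mul_pow_succ_le_one_add_pow_of_le {a x y : ℝ} {k : ℕ} (hx : 0 ≤ x) (hy : 0 < y)
    (hxy : x ≤ y) (hroot : a * y ^ (k + 1) = (1 + y) ^ k) :
    a * x ^ (k + 1) ≤ (1 + x) ^ k := by
  refine le_of_mul_le_mul_right ?_ (pow_pos hy (k + 1))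
  calc a * x ^ (k + 1) * y ^ (k + 1) = x ^ (k + 1) * (1 + y) ^ k := by rw [← hroot]; ring
    _ ≤ y ^ (k + 1) * (1 + x) ^ k := pow_succ_mul_one_add_pow_le_of_le hx hxy k
    _ = (1 + x) ^ k * y ^ (k + 1) := mul_comm _ _

lemma one_add_pow_le_mul_pow_succ_of_le {a x y : ℝ} {k : ℕ} (hx : 0 < x) (hxy : x ≤ y)
    (hroot : a * x ^ (k + 1) = (1 + x) ^ k) :
    (1 + y) ^ k ≤ a * y ^ (k + 1) := by
  refine le_of_mul_le_mul_right ?_ (pow_pos hx (k + 1))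
  calc (1 + y) ^ k * x ^ (k + 1) = x ^ (k + 1) * (1 + y) ^ k := mul_comm _ _
    _ ≤ y ^ (k + 1) * (1 + x) ^ k := pow_succ_mul_one_add_pow_le_of_le hx.le hxy k
    _ = a * y ^ (k + 1) * x ^ (k + 1) := by rw [← hroot]; ring

noncomputable def potential (k : ℕ) (a b z : ℝ) : ℝ :=
  (k : ℝ) / (k + 1) * a * z ^ (k + 1) - (1 + z) ^ k + b

lemma hasDerivAt_potential (k : ℕ) (a b x : ℝ) :
    HasDerivAt (potential k a b) (k * (a * x ^ k - (1 + x) ^ (k - 1))) x := by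
  refine ((((hasDerivAt_pow (k + 1) x).const_mul ((k : ℝ) / (k + 1) * a)).sub
    (((hasDerivAt_id' x).const_add 1).pow k)).add_const b).congr_deriv ?_
  have hk : (k : ℝ) + 1 ≠ 0 := by positivity
  rw [Nat.add_sub_cancel]
  push_cast
  field_simp

lemma potential_eq_zero_of_root {m : ℕ} {a z₀ : ℝ}
    (hroot : a * z₀ ^ (m + 1) = (1 + z₀) ^ m) :
    potential (m + 1) a ((1 + z₀) ^ m * (1 + z₀ / ((m + 1 : ℕ) + 1))) z₀ = 0 := by
  have hk : ((m + 1 : ℕ) : ℝ) + 1 ≠ 0 := by positivity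
  have hstep : a * z₀ ^ (m + 1 + 1) = (1 + z₀) ^ m * z₀ := by
    rw [pow_succ, ← mul_assoc, hroot]
  unfold potential
  rw [mul_assoc _ a, hstep, pow_succ (1 + z₀)]
  field_simp
  ring

lemma isMinOn_potential {m : ℕ} {a b z₀ : ℝ} (hz₀ : 0 < z₀)
    (hroot : a * z₀ ^ (m + 1) = (1 + z₀) ^ m) :
    IsMinOn (potential (m + 1) a b) (Ioi 0) z₀ := by
  have hderiv (x : ℝ) :
      deriv (potential (m + 1) a b) x = (m + 1) * (a * x ^ (m + 1) - (1 + x) ^ m) := by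
    simp [(hasDerivAt_potential (m + 1) a b x).deriv]
  have hdiff : Differentiable ℝ (potential (m + 1) a b) :=
    fun x => (hasDerivAt_potential _ a b x).differentiableAt
  refine isMinOn_Ioi_of_deriv hdiff.continuous.continuousAt hdiff.differentiableOn
    hdiff.differentiableOn ?_ ?_
  · rintro x ⟨hx, hxz₀⟩
    have hsign := mul_pow_succ_le_one_add_pow_of_le hx.le hz₀ hxz₀.le hroot
    rw [hderiv]
    exact mul_nonpos_of_nonneg_of_nonpos (by positivity) (by linarith)
  · rintro x hz₀x
    have hsign := one_add_pow_le_mul_pow_succ_of_le hz₀ (le_of_lt hz₀x) hroot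
    rw [hderiv]
    exact mul_nonneg (by positivity) (by linarith)

theorem stmt_7_general (k : ℕ) (hk : 2 ≤ k) (a : ℝ)
    (z₀ : ℝ) (hz₀ : 0 < z₀) (hroot : a * z₀ ^ k = (1 + z₀) ^ (k - 1)) :
    ∀ z : ℝ, 0 < z →
      ((k : ℝ) / (k + 1)) * a * z ^ (k + 1) - (1 + z) ^ k
        + (1 + z₀) ^ (k - 1) * (1 + z₀ / (k + 1)) ≥ 0 := by
  obtain ⟨m, rfl⟩ : ∃ m, k = m + 1 := ⟨k - 1, by omega⟩
  rw [Nat.add_sub_cancel] at hroot ⊢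
  intro z hz
  have hmin := isMinOn_potential (b := (1 + z₀) ^ m * (1 + z₀ / ((m + 1 : ℕ) + 1)))
    hz₀ hroot (mem_Ioi.mpr hz)
  rw [mem_ofPred_eq, potential_eq_zero_of_root hroot] at hmin
  exact hmin

theorem stmt_7 (k : ℕ) (hk : 2 ≤ k) (a : ℝ) (ha0 : 0 < a) (ha1 : a ≤ 1)
    (z₀ : ℝ) (hz₀ : 0 < z₀) (hroot : a * z₀ ^ k = (1 + z₀) ^ (k - 1))
    (huniq : ∀ z : ℝ, 0 < z → a * z ^ k = (1 + z) ^ (k - 1) → z = z₀) :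
    ∀ z : ℝ, 0 < z →
      ((k : ℝ) / (k + 1)) * a * z ^ (k + 1) - (1 + z) ^ k
        + (1 + z₀) ^ (k - 1) * (1 + z₀ / (k + 1)) ≥ 0 :=
  stmt_7_general k hk a z₀ hz₀ hroot
end

section
/- For any finite multiset A of nonnegative reals and any positive integer k, Ψ_k(A)^(k+1) ≤ Ψ_{k+1}(A)^k. -/
/-- Complete homogeneous symmetric polynomial of degree `k` in the elements of `l`. -/
def hpoly : ℕ → List ℝ → ℝ
  | 0, _ => 1
  | _ + 1, [] => 0
  | k + 1, x :: l => x * hpoly k (x :: l) + hpoly (k + 1) l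
termination_by k l => (k, l.length)

/-- `Ψ_k(A) = k! · h_k(A)`. -/
noncomputable def Psi (k : ℕ) (l : List ℝ) : ℝ := (Nat.factorial k : ℝ) * hpoly k l

/-!
Since `Ψ_k` is `k!` times the coefficient of `t^k` in `∏ 1 / (1 - x t)`, the sequence
`k ↦ Ψ_k (x :: l)` is the binomial convolution of `j ↦ j! x^j` and `k ↦ Ψ_k l`. Binomial
convolution preserves log-convexity of nonnegative sequences (Leibniz rule and Cauchy–Schwarz), so
`k ↦ Ψ_k` is log-convex with `Ψ_0 = 1`, and every nonnegative log-convex sequence satisfies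
`a_k^(k+1) ≤ a_0 · a_(k+1)^k`.
-/

open Finset Nat

section Semiring

variable {R : Type*} [CommSemiring R]

def binomConv (a b : ℕ → R) (n : ℕ) : R :=
  ∑ ij ∈ antidiagonal n, (n.choose ij.1 : R) * (a ij.1 * b ij.2)

theorem binomConv_succ (a b : ℕ → R) (n : ℕ) :
    binomConv a b (n + 1) =
      binomConv a (fun j ↦ b (j + 1)) n + binomConv (fun i ↦ a (i + 1)) b n := by
  rw [binomConv, sum_antidiagonal_choose_succ_mul (fun i j ↦ a i * b j)]
  congr 1
  refine sum_congr rfl fun ij hij ↦ ?_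
  rw [choose_symm_of_eq_add (mem_antidiagonal.1 hij).symm]

theorem binomConv_add_two (a b : ℕ → R) (n : ℕ) :
    binomConv a b (n + 2) =
      binomConv a (fun j ↦ b (j + 2)) n
        + 2 * binomConv (fun i ↦ a (i + 1)) (fun j ↦ b (j + 1)) n
        + binomConv (fun i ↦ a (i + 2)) b n := by
  rw [binomConv_succ, binomConv_succ, binomConv_succ]
  ring

end Semiring

section OrderedSemiring

variable {R : Type*} [CommSemiring R] [LinearOrder R] [IsStrictOrderedRing R]

def LogConvexSeq (a : ℕ → R) : Prop := ∀ n, a (n + 1) ^ 2 ≤ a n * a (n + 2)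

theorem LogConvexSeq.binomConv [ExistsAddOfLE R] {a b : ℕ → R} (ha₀ : ∀ n, 0 ≤ a n)
    (hb₀ : ∀ n, 0 ≤ b n) (ha : LogConvexSeq a) (hb : LogConvexSeq b) :
    LogConvexSeq (binomConv a b) := by
  intro n
  -- By the Leibniz rule the terms at `n + 1` and `n + 2` are sums over `antidiagonal n`, like the
  -- term at `n`, so Cauchy–Schwarz reduces the claim to a termwise inequality.
  have h₁ : _root_.binomConv a b (n + 1) = ∑ ij ∈ antidiagonal n,
      (n.choose ij.1 : R) * (a ij.1 * b (ij.2 + 1) + a (ij.1 + 1) * b ij.2) := by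
    rw [binomConv_succ]
    simp only [_root_.binomConv, ← sum_add_distrib, mul_add]
  have h₂ : _root_.binomConv a b (n + 2) = ∑ ij ∈ antidiagonal n, (n.choose ij.1 : R) *
      (a ij.1 * b (ij.2 + 2) + 2 * (a (ij.1 + 1) * b (ij.2 + 1)) + a (ij.1 + 2) * b ij.2) := by
    rw [binomConv_add_two]
    simp only [_root_.binomConv, mul_sum, ← sum_add_distrib]
    exact sum_congr rfl fun ij _ ↦ by ring
  rw [h₁, h₂]
  have hab : ∀ i j, 0 ≤ a i * b j := fun i j ↦ mul_nonneg (ha₀ i) (hb₀ j)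
  refine sum_sq_le_sum_mul_sum_of_sq_le_mul _ (fun ij _ ↦ by have := hab ij.1 ij.2; positivity)
    (fun ij _ ↦ by
      have := hab ij.1 (ij.2 + 2); have := hab (ij.1 + 1) (ij.2 + 1); have := hab (ij.1 + 2) ij.2
      positivity)
    fun ij _ ↦ ?_
  obtain ⟨i, j⟩ := ij
  have := ha₀ i
  have := hb₀ j
  calc ((n.choose i : R) * (a i * b (j + 1) + a (i + 1) * b j)) ^ 2
      = (n.choose i : R) ^ 2 * (a i ^ 2 * b (j + 1) ^ 2 + 2 * (a i * a (i + 1) * b j * b (j + 1))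
          + a (i + 1) ^ 2 * b j ^ 2) := by ring
    _ ≤ (n.choose i : R) ^ 2 * (a i ^ 2 * (b j * b (j + 2))
          + 2 * (a i * a (i + 1) * b j * b (j + 1)) + a i * a (i + 2) * b j ^ 2) := by
        gcongr; exacts [hb j, ha i]
    _ = _ := by ring

theorem LogConvexSeq.pow_succ_le {a : ℕ → R} (h₀ : ∀ n, 0 ≤ a n) (ha : LogConvexSeq a)
    (k : ℕ) : a k ^ (k + 1) ≤ a 0 * a (k + 1) ^ k := by
  induction k with
  | zero => simp
  | succ k ih =>
    rcases (h₀ (k + 1)).eq_or_lt with h | h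
    · rw [← h, zero_pow (by omega)]; exact mul_nonneg (h₀ 0) (pow_nonneg (h₀ _) _)
    refine le_of_mul_le_mul_left ?_ (pow_pos h k)
    calc a (k + 1) ^ k * a (k + 1) ^ (k + 1 + 1)
        = (a (k + 1) ^ 2) ^ (k + 1) := by ring
      _ ≤ (a k * a (k + 2)) ^ (k + 1) := by gcongr; exact ha k
      _ = a k ^ (k + 1) * a (k + 2) ^ (k + 1) := mul_pow _ _ _
      _ ≤ a 0 * a (k + 1) ^ k * a (k + 2) ^ (k + 1) := by gcongr; exact pow_nonneg (h₀ _) _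
      _ = a (k + 1) ^ k * (a 0 * a (k + 1 + 1) ^ (k + 1)) := by ring

theorem logConvexSeq_factorial_mul_pow [ExistsAddOfLE R] (x : R) :
    LogConvexSeq fun j ↦ (j ! : R) * x ^ j := by
  intro j
  have key : (j + 1)! * (j + 1)! ≤ j ! * (j + 2)! := by
    simp only [factorial_succ]
    nlinarith [factorial_pos j]
  calc ((j + 1)! * x ^ (j + 1) : R) ^ 2 = ((j + 1)! * (j + 1)! : ℕ) * (x ^ (j + 1)) ^ 2 := by
        push_cast; ring
    _ ≤ (j ! * (j + 2)! : ℕ) * (x ^ (j + 1)) ^ 2 :=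
        mul_le_mul_of_nonneg_right (mod_cast key) (sq_nonneg _)
    _ = _ := by push_cast; ring

end OrderedSemiring

theorem hpoly_nonneg {l : List ℝ} (hl : ∀ x ∈ l, 0 ≤ x) (k : ℕ) : 0 ≤ hpoly k l := by
  induction l generalizing k with
  | nil => cases k <;> simp [hpoly]
  | cons x l ih =>
    have hx := hl x List.mem_cons_self
    have ih' := ih fun y hy ↦ hl y (List.mem_cons_of_mem x hy)
    induction k with
    | zero => simp [hpoly]
    | succ k _ => rw [hpoly]; have := ih' (k + 1); positivity

theorem hpoly_cons (x : ℝ) (l : List ℝ) (k : ℕ) :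
    hpoly k (x :: l) = ∑ ij ∈ antidiagonal k, x ^ ij.1 * hpoly ij.2 l := by
  induction k with
  | zero => simp [hpoly]
  | succ k ih =>
    rw [hpoly, ih, Nat.sum_antidiagonal_succ, mul_sum, add_comm]
    simp only [pow_zero, one_mul, pow_succ]
    congr 1
    exact sum_congr rfl fun ij _ ↦ by ring

theorem Psi_cons (x : ℝ) (l : List ℝ) :
    (Psi · (x :: l)) = binomConv (fun j ↦ (j ! : ℝ) * x ^ j) (Psi · l) := by
  funext k
  rw [Psi, hpoly_cons, binomConv, mul_sum]
  refine sum_congr rfl fun ij hij ↦ ?_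
  obtain rfl := mem_antidiagonal.1 hij
  rw [Psi, ← choose_mul_factorial_mul_factorial (Nat.le_add_right ij.1 ij.2),
    Nat.add_sub_cancel_left]
  push_cast
  ring

theorem Psi_zero (l : List ℝ) : Psi 0 l = 1 := by
  simp [Psi, hpoly]

theorem Psi_nonneg {l : List ℝ} (hl : ∀ x ∈ l, 0 ≤ x) (k : ℕ) : 0 ≤ Psi k l :=
  mul_nonneg (by positivity) (hpoly_nonneg hl k)

theorem logConvexSeq_Psi {l : List ℝ} (hl : ∀ x ∈ l, 0 ≤ x) : LogConvexSeq (Psi · l) := by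
  induction l with
  | nil => intro n; simp [Psi, hpoly]
  | cons x l ih =>
    have hx := hl x List.mem_cons_self
    have hl' : ∀ y ∈ l, 0 ≤ y := fun y hy ↦ hl y (List.mem_cons_of_mem x hy)
    rw [Psi_cons]
    exact (logConvexSeq_factorial_mul_pow x).binomConv (fun j ↦ by positivity)
      (Psi_nonneg hl') (ih hl')

theorem stmt_11_general (l : List ℝ) (hl : ∀ x ∈ l, 0 ≤ x) (k : ℕ) :
    Psi k l ^ (k + 1) ≤ Psi (k + 1) l ^ k := by
  have h := (logConvexSeq_Psi hl).pow_succ_le (Psi_nonneg hl) k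
  rwa [Psi_zero, one_mul] at h

theorem stmt_11 (l : List ℝ) (hl : ∀ x ∈ l, 0 ≤ x) (k : ℕ) (hk : 1 ≤ k) :
    Psi k l ^ (k + 1) ≤ Psi (k + 1) l ^ k :=
  stmt_11_general l hl k
end

section
/- For any finite multiset A of nonnegative reals, any nonnegative real b, and any positive integer k, Ψ_k(A ∪ {b}) = Ψ_k(A) + k·b·Ψ_{k−1}(A ∪ {b}). -/
theorem hpoly_succ_cons (k : ℕ) (x : ℝ) (l : List ℝ) :
    hpoly (k + 1) (x :: l) = x * hpoly k (x :: l) + hpoly (k + 1) l := by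
  rw [hpoly]

theorem Psi_succ_cons (k : ℕ) (b : ℝ) (l : List ℝ) :
    Psi (k + 1) (b :: l) = Psi (k + 1) l + (k + 1 : ℝ) * b * Psi k (b :: l) := by
  simp only [Psi, hpoly_succ_cons, Nat.factorial_succ]
  push_cast
  ring

theorem stmt_12_general (l : List ℝ) (b : ℝ)
    (k : ℕ) (hk : 1 ≤ k) :
    Psi k (b :: l) = Psi k l + (k : ℝ) * b * Psi (k - 1) (b :: l) := by
  obtain ⟨m, rfl⟩ := Nat.exists_eq_add_of_le' hk
  simpa using Psi_succ_cons m b l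

theorem stmt_12 (l : List ℝ) (hl : ∀ x ∈ l, 0 ≤ x) (b : ℝ) (hb : 0 ≤ b)
    (k : ℕ) (hk : 1 ≤ k) :
    Psi k (b :: l) = Psi k l + (k : ℝ) * b * Psi (k - 1) (b :: l) :=
  stmt_12_general l b k hk
end

section
/- Let P be a positive integer, let (n_i) and (m_i) be nonnegative reals for 1 ≤ i ≤ P, let (q_i) be a positive strictly increasing sequence, and define A_{i,j} = ∑_{t<i} n_t·q_t + j·q_i and B_{i,j} = ∑_{t<i} m_t·q_t + j·q_i. Then for every positive integer k there exists a constant λ_k (depending only on k) such that ∑_{i=1}^P ∑_{j=1}^{m_i} (A_{i,n_i} + j·q_i)^k ≤ ((k+1)/(k+2))·∑_{i=1}^P ∑_{j=1}^{n_i} A_{i,j}^k + λ_k·∑_{i=1}^P ∑_{j=1}^{m_i} B_{i,j}^k. -/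
/-!
Write `x_i = A_{i,n_i}` and `θ = 2^(2k+3)`. A delayed job `(i, j)` is light when `θ B_{i,j} ≥ x_i`;
then `x_i + j q_i ≤ (θ + 1) B_{i,j}`, which the `λ_k`-term pays for. A class `i` with `h_i` heavy
jobs costs at most `2^k h_i x_i^k`. Since `q` is increasing, the jobs of classes `≤ i` finishing in
`(x_i/2, x_i]` carry work at least `x_i/2` in pieces of size at most `q_i`, so there are at least
`x_i/(2 q_i)` of them, and `h_i x_i^k` is charged to them with weight `2^(k+1) h_i q_i / x_i`.
A job finishing at time `c` is charged only by heavy classes with `c ≤ x_i < 2c`, and the heavy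
work of all classes up to the last of these is below `x_i/θ < 2c/θ`; so it receives at most
`2^(k+2)/θ · c^k`, and the heavy classes cost at most `2^k · 2^(k+2)/θ · ∑ A_{t,j}^k`, which is
half of `∑ A_{t,j}^k`.
-/

open Finset

namespace ClassSchedule

noncomputable def prefixWork (n : ℕ → ℕ) (q : ℕ → ℝ) (i : ℕ) : ℝ :=
  ∑ t ∈ Ico 1 i, (n t : ℝ) * q t

-- `completion n q i j` and `completion m q i j` are the paper's `A_{i,j}` and `B_{i,j}`.
noncomputable def completion (n : ℕ → ℕ) (q : ℕ → ℝ) (i j : ℕ) : ℝ :=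
  prefixWork n q i + j * q i

noncomputable def cost (n : ℕ → ℕ) (q : ℕ → ℝ) (k P : ℕ) : ℝ :=
  ∑ i ∈ Icc 1 P, ∑ j ∈ Icc 1 (n i), completion n q i j ^ k

noncomputable def delayedCost (n m : ℕ → ℕ) (q : ℕ → ℝ) (k P : ℕ) : ℝ :=
  ∑ i ∈ Icc 1 P, ∑ j ∈ Icc 1 (m i), (prefixWork n q (i + 1) + j * q i) ^ k

noncomputable def heavyCount (n m : ℕ → ℕ) (q : ℕ → ℝ) (θ : ℝ) (i : ℕ) : ℕ :=
  #{j ∈ Icc 1 (m i) | θ * completion m q i j < prefixWork n q (i + 1)}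

/-- The part of the cost `a x_i^k` of `a` heavy jobs of class `i`, where `x_i = A_{i,n_i}`, that is
charged to the job `(t, j)`. -/
noncomputable def charge (n : ℕ → ℕ) (q : ℕ → ℝ) (k : ℕ) (a : ℝ) (i t j : ℕ) : ℝ :=
  if t ≤ i ∧ prefixWork n q (i + 1) / 2 < completion n q t j then
    2 ^ (k + 1) * (a * q i / prefixWork n q (i + 1)) * completion n q t j ^ k
  else 0

lemma exists_mem_card_le {s : Finset ℕ} (hs : s.Nonempty) (h0 : 0 ∉ s) : ∃ j ∈ s, #s ≤ j := by
  refine ⟨s.max' hs, s.max'_mem hs, ?_⟩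
  have hsub : s ⊆ Icc 1 (s.max' hs) := fun x hx =>
    mem_Icc.2 ⟨Nat.one_le_iff_ne_zero.2 (ne_of_mem_of_not_mem hx h0), s.le_max' x hx⟩
  simpa using card_le_card hsub

lemma add_pow_le_ite_add {x y b θ : ℝ} (hx : 0 ≤ x) (hy : 0 ≤ y) (hyb : y ≤ b) (hθ : 1 ≤ θ)
    (k : ℕ) : (x + y) ^ k ≤ (if θ * b < x then 2 ^ k * x ^ k else 0) + ((θ + 1) * b) ^ k := by
  split_ifs with h
  · calc (x + y) ^ k ≤ (2 * x) ^ k := pow_le_pow_left₀ (by positivity) (by nlinarith) k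
      _ = 2 ^ k * x ^ k := mul_pow ..
      _ ≤ _ := le_add_of_nonneg_right (pow_nonneg (by nlinarith) k)
  · rw [zero_add]
    exact pow_le_pow_left₀ (by positivity) (by nlinarith) k

lemma sum_div_le_two_div {E : Finset ℕ} {w x : ℕ → ℝ} {θ c : ℝ} (hθ : 0 < θ) (hc : 0 < c)
    (hw : ∀ i, 0 ≤ w i) (hE : ∀ i ∈ E, 1 ≤ i) (hcx : ∀ i ∈ E, c ≤ x i ∧ x i < 2 * c)
    (hwx : ∀ i ∈ E, θ * ∑ s ∈ Icc 1 i, w s < x i) : ∑ i ∈ E, w i / x i ≤ 2 / θ := by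
  rcases E.eq_empty_or_nonempty with rfl | hne
  · simpa using div_nonneg zero_le_two hθ.le
  have hi₀ := E.max'_mem hne
  have hsub : E ⊆ Icc 1 (E.max' hne) := fun i hi => mem_Icc.2 ⟨hE i hi, E.le_max' i hi⟩
  have hsum : ∑ i ∈ E, w i ≤ ∑ s ∈ Icc 1 (E.max' hne), w s :=
    sum_le_sum_of_subset_of_nonneg hsub fun i _ _ => hw i
  calc ∑ i ∈ E, w i / x i ≤ ∑ i ∈ E, w i / c :=
        sum_le_sum fun i hi => div_le_div_of_nonneg_left (hw i) hc (hcx i hi).1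
    _ = (∑ i ∈ E, w i) / c := (sum_div ..).symm
    _ ≤ 2 / θ := by
        rw [div_le_div_iff₀ hc hθ]
        nlinarith [hwx _ hi₀, (hcx _ hi₀).2]

lemma exists_monotone_pos_eqOn {P : ℕ} {q : ℕ → ℝ} (hP : 1 ≤ P) (hq : ∀ i ∈ Icc 1 P, 0 < q i)
    (hmono : MonotoneOn q (Set.Icc 1 P)) :
    ∃ q' : ℕ → ℝ, Monotone q' ∧ (∀ i, 0 < q' i) ∧ ∀ i ∈ Icc 1 P, q' i = q i := by
  refine ⟨Set.IccExtend hP fun i => q i,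
    Monotone.IccExtend hP (Set.monotoneOn_iff_monotone.1 hmono), fun i => hq _ ?_,
    fun i hi => Set.IccExtend_of_mem hP _ (by simpa using hi)⟩
  exact mem_Icc.2 (Set.projIcc 1 P hP i).2

section

variable {n m : ℕ → ℕ} {q : ℕ → ℝ} {θ : ℝ}

lemma prefixWork_succ {i : ℕ} (hi : 1 ≤ i) : prefixWork n q (i + 1) = completion n q i (n i) := by
  rw [prefixWork, sum_Ico_succ_top hi]
  rfl

lemma prefixWork_succ_eq_sum_Icc (i : ℕ) :
    prefixWork n q (i + 1) = ∑ t ∈ Icc 1 i, (n t : ℝ) * q t := by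
  rw [prefixWork, Ico_add_one_right_eq_Icc]

lemma prefixWork_one : prefixWork n q 1 = 0 := by simp [prefixWork]

lemma prefixWork_nonneg (hq : ∀ i, 0 ≤ q i) (i : ℕ) : 0 ≤ prefixWork n q i :=
  sum_nonneg fun t _ => mul_nonneg (Nat.cast_nonneg _) (hq t)

lemma prefixWork_mono (hq : ∀ i, 0 ≤ q i) : Monotone (prefixWork n q) := fun _ _ hab =>
  sum_le_sum_of_subset_of_nonneg (Ico_subset_Ico_right hab) fun t _ _ =>
    mul_nonneg (Nat.cast_nonneg _) (hq t)

lemma prefixWork_congr {q' : ℕ → ℝ} {i : ℕ} (h : ∀ t ∈ Ico 1 i, q' t = q t) :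
    prefixWork n q' i = prefixWork n q i :=
  sum_congr rfl fun t ht => by rw [h t ht]

lemma completion_le_prefixWork_succ (hq : ∀ i, 0 ≤ q i) {i j : ℕ} (hi : 1 ≤ i) (hj : j ≤ n i) :
    completion n q i j ≤ prefixWork n q (i + 1) := by
  rw [prefixWork_succ hi]
  unfold completion
  gcongr
  exact hq i

lemma completion_pos (hq : ∀ i, 0 < q i) {i j : ℕ} (hj : 1 ≤ j) : 0 < completion n q i j :=
  add_pos_of_nonneg_of_pos (prefixWork_nonneg (fun t => (hq t).le) i)
    (mul_pos (by exact_mod_cast hj) (hq i))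

lemma cost_congr {q' : ℕ → ℝ} {k P : ℕ} (h : ∀ i ∈ Icc 1 P, q' i = q i) :
    cost n q' k P = cost n q k P := by
  refine sum_congr rfl fun i hi => sum_congr rfl fun j _ => ?_
  have hpre : prefixWork n q' i = prefixWork n q i := prefixWork_congr fun t ht =>
    h t (mem_Icc.2 ⟨(mem_Ico.1 ht).1, by grind⟩)
  rw [completion, completion, hpre, h i hi]

lemma delayedCost_congr {q' : ℕ → ℝ} {k P : ℕ} (h : ∀ i ∈ Icc 1 P, q' i = q i) :
    delayedCost n m q' k P = delayedCost n m q k P := by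
  refine sum_congr rfl fun i hi => sum_congr rfl fun j _ => ?_
  have hpre : prefixWork n q' (i + 1) = prefixWork n q (i + 1) := prefixWork_congr fun t ht =>
    h t (mem_Icc.2 ⟨(mem_Ico.1 ht).1, by grind⟩)
  rw [hpre, h i hi]

lemma cost_nonneg (hq : ∀ i, 0 ≤ q i) (k P : ℕ) : 0 ≤ cost n q k P :=
  sum_nonneg fun _ _ => sum_nonneg fun _ _ =>
    pow_nonneg (add_nonneg (prefixWork_nonneg hq _) (mul_nonneg (Nat.cast_nonneg _) (hq _))) k

lemma mul_card_completion_le (hq : ∀ i, 0 ≤ q i) {t : ℕ} (ht : 1 ≤ t) (X : ℝ) :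
    q t * #{j ∈ Icc 1 (n t) | completion n q t j ≤ X}
      ≤ min (prefixWork n q (t + 1)) X - min (prefixWork n q t) X := by
  set s := {j ∈ Icc 1 (n t) | completion n q t j ≤ X}
  rcases s.eq_empty_or_nonempty with hs | hs
  · simpa [hs] using min_le_min_right X (prefixWork_mono hq t.le_succ)
  obtain ⟨j, hj, hcard⟩ := exists_mem_card_le hs (by simp [s])
  rw [mem_filter, mem_Icc] at hj
  have hcj : q t * #s ≤ j * q t := by
    rw [mul_comm]
    gcongr
    exact hq t
  have hle := completion_le_prefixWork_succ hq ht hj.1.2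
  have hjX := hj.2
  unfold completion at hle hjX
  have hSX : prefixWork n q t ≤ X := by nlinarith [hq t]
  rw [min_eq_left hSX]
  exact le_sub_iff_add_le'.2 (le_min (by linarith) (by linarith))

lemma sum_mul_card_completion_le (hq : ∀ i, 0 ≤ q i) {X : ℝ} (hX : 0 ≤ X) (i : ℕ) :
    ∑ t ∈ Icc 1 i, q t * #{j ∈ Icc 1 (n t) | completion n q t j ≤ X} ≤ X :=
  calc _ ≤ ∑ t ∈ Ico 1 (i + 1), (min (prefixWork n q (t + 1)) X - min (prefixWork n q t) X) := by
        rw [Ico_add_one_right_eq_Icc]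
        exact sum_le_sum fun t ht => mul_card_completion_le hq (mem_Icc.1 ht).1 X
    _ = min (prefixWork n q (i + 1)) X := by
        rw [sum_Ico_sub (fun t => min (prefixWork n q t) X) (by omega), prefixWork_one,
          min_eq_left hX, sub_zero]
    _ ≤ X := min_le_right _ _

lemma prefixWork_sub_le_sum_mul_card (hq : ∀ i, 0 ≤ q i) {X : ℝ} (hX : 0 ≤ X) (i : ℕ) :
    prefixWork n q (i + 1) - X
      ≤ ∑ t ∈ Icc 1 i, q t * #{j ∈ Icc 1 (n t) | X < completion n q t j} := by
  have hsplit : ∀ t, q t * #{j ∈ Icc 1 (n t) | X < completion n q t j}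
      = n t * q t - q t * #{j ∈ Icc 1 (n t) | completion n q t j ≤ X} := by
    intro t
    have := card_filter_add_card_filter_not (s := Icc 1 (n t)) (fun j => completion n q t j ≤ X)
    simp only [not_le, Nat.card_Icc, add_tsub_cancel_right] at this
    have hcast : (#{j ∈ Icc 1 (n t) | X < completion n q t j} : ℝ)
        = n t - #{j ∈ Icc 1 (n t) | completion n q t j ≤ X} := by
      rw [eq_sub_iff_add_eq', ← Nat.cast_add, this]
    rw [hcast]
    ring
  rw [sum_congr rfl fun t _ => hsplit t, sum_sub_distrib, ← prefixWork_succ_eq_sum_Icc]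
  linarith [sum_mul_card_completion_le (n := n) hq hX i]

lemma pow_mul_sub_le_slice (hq : ∀ i, 0 ≤ q i) (hmono : Monotone q) {X : ℝ} (hX : 0 ≤ X) (k : ℕ)
    {i P : ℕ} (hiP : i ≤ P) :
    X ^ k * (prefixWork n q (i + 1) - X) ≤ q i * ∑ t ∈ Icc 1 P, ∑ j ∈ Icc 1 (n t),
      if t ≤ i ∧ X < completion n q t j then completion n q t j ^ k else 0 := by
  have hgrid : ∑ t ∈ Icc 1 P, ∑ j ∈ Icc 1 (n t),
      (if t ≤ i ∧ X < completion n q t j then completion n q t j ^ k else 0)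
      = ∑ t ∈ Icc 1 i, ∑ j ∈ Icc 1 (n t) with X < completion n q t j, completion n q t j ^ k := by
    rw [show Icc 1 i = {t ∈ Icc 1 P | t ≤ i} by ext; simp; omega, sum_filter]
    refine sum_congr rfl fun t _ => ?_
    split_ifs with hti <;> simp [sum_filter, hti]
  calc X ^ k * (prefixWork n q (i + 1) - X)
      ≤ X ^ k * ∑ t ∈ Icc 1 i, q t * #{j ∈ Icc 1 (n t) | X < completion n q t j} := by
        gcongr
        exact prefixWork_sub_le_sum_mul_card hq hX i
    _ = ∑ t ∈ Icc 1 i, ∑ j ∈ Icc 1 (n t) with X < completion n q t j, q t * X ^ k := by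
        simp only [mul_sum, sum_const, nsmul_eq_mul]
        exact sum_congr rfl fun t _ => by ring
    _ ≤ ∑ t ∈ Icc 1 i, ∑ j ∈ Icc 1 (n t) with X < completion n q t j,
          q i * completion n q t j ^ k := by
        gcongr with t ht j hj
        · exact hq i
        · exact hmono (mem_Icc.1 ht).2
        · exact (mem_filter.1 hj).2.le
    _ = _ := by simp only [hgrid, mul_sum]

lemma heavyCount_le (i : ℕ) : heavyCount n m q θ i ≤ m i := by
  unfold heavyCount
  simpa using card_filter_le (Icc 1 (m i)) _

lemma mul_sum_heavyCount_lt (hq : ∀ i, 0 ≤ q i) (hθ : 0 ≤ θ) {i : ℕ} (hi : 1 ≤ i)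
    (hh : heavyCount n m q θ i ≠ 0) :
    θ * ∑ s ∈ Icc 1 i, (heavyCount n m q θ s : ℝ) * q s < prefixWork n q (i + 1) := by
  obtain ⟨j, hj, hcard⟩ := exists_mem_card_le (card_ne_zero.1 hh) (by simp)
  rw [mem_filter] at hj
  have hsum : ∑ s ∈ Icc 1 i, (heavyCount n m q θ s : ℝ) * q s ≤ completion m q i j := by
    rw [← Ico_add_one_right_eq_Icc, sum_Ico_succ_top hi, completion, prefixWork]
    gcongr with s
    · exact hq s
    · exact_mod_cast heavyCount_le s
    · exact hq i
    · exact_mod_cast hcard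
  calc _ ≤ θ * completion m q i j := by gcongr
    _ < _ := hj.2

lemma mul_pow_le_sum_charge (hq : ∀ i, 0 ≤ q i) (hmono : Monotone q) (k : ℕ) {i P : ℕ}
    (hiP : i ≤ P) {a : ℝ} (ha : 0 ≤ a) (hx : 0 < prefixWork n q (i + 1)) :
    a * prefixWork n q (i + 1) ^ k ≤ ∑ t ∈ Icc 1 P, ∑ j ∈ Icc 1 (n t), charge n q k a i t j := by
  set x := prefixWork n q (i + 1)
  have hslice := pow_mul_sub_le_slice (n := n) hq hmono (half_pos hx).le k hiP
  calc a * x ^ k = 2 ^ (k + 1) * (a / x) * ((x / 2) ^ k * (x - x / 2)) := by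
        rw [div_pow]
        field_simp
        ring
    _ ≤ 2 ^ (k + 1) * (a / x) * (q i * _) := by gcongr
    _ = _ := by
        simp only [mul_sum, charge, mul_ite, mul_zero]
        refine sum_congr rfl fun t _ => sum_congr rfl fun j _ => ?_
        congr 1
        ring

lemma sum_charge_le (hq : ∀ i, 0 < q i) (hθ : 0 < θ) (h : ℕ → ℕ) {k P : ℕ}
    (hh : ∀ i ∈ Icc 1 P, h i ≠ 0 → θ * ∑ s ∈ Icc 1 i, (h s : ℝ) * q s < prefixWork n q (i + 1))
    {t j : ℕ} (ht : 1 ≤ t) (hj : j ∈ Icc 1 (n t)) :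
    ∑ i ∈ Icc 1 P with h i ≠ 0, charge n q k (h i) i t j
      ≤ 2 ^ (k + 2) / θ * completion n q t j ^ k := by
  have hq₀ : ∀ i, 0 ≤ q i := fun i => (hq i).le
  set x := fun i => prefixWork n q (i + 1)
  set c := completion n q t j
  obtain ⟨hj₁, hjn⟩ := mem_Icc.1 hj
  have hc : 0 < c := completion_pos hq hj₁
  set E := {i ∈ Icc 1 P | h i ≠ 0 ∧ t ≤ i ∧ x i / 2 < c}
  have hE : ∀ i ∈ E, (1 ≤ i ∧ i ≤ P) ∧ h i ≠ 0 ∧ t ≤ i ∧ x i / 2 < c := by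
    intro i hi
    simpa only [E, mem_filter, mem_Icc] using hi
  have hdiv : ∑ i ∈ E, h i * q i / x i ≤ 2 / θ :=
    sum_div_le_two_div (w := fun s => h s * q s) hθ hc
      (fun s => mul_nonneg (Nat.cast_nonneg _) (hq₀ s)) (fun i hi => (hE i hi).1.1)
      (fun i hi => ⟨(completion_le_prefixWork_succ hq₀ ht hjn).trans
          (prefixWork_mono hq₀ (Nat.add_le_add_right (hE i hi).2.2.1 1)),
        by linarith [(hE i hi).2.2.2]⟩)
      (fun i hi => hh i (mem_Icc.2 (hE i hi).1) (hE i hi).2.1)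
  have hcharge : ∀ i, charge n q k (h i) i t j
      = if t ≤ i ∧ x i / 2 < c then 2 ^ (k + 1) * (h i * q i / x i) * c ^ k else 0 := fun _ => rfl
  calc ∑ i ∈ Icc 1 P with h i ≠ 0, charge n q k (h i) i t j
      = 2 ^ (k + 1) * (∑ i ∈ E, h i * q i / x i) * c ^ k := by
        rw [sum_congr rfl fun i _ => hcharge i, ← sum_filter, filter_filter, mul_sum, sum_mul]
    _ ≤ 2 ^ (k + 1) * (2 / θ) * c ^ k := by gcongr
    _ = 2 ^ (k + 2) / θ * c ^ k := by ring

theorem sum_mul_prefixWork_pow_le (hq : ∀ i, 0 < q i) (hmono : Monotone q) (hθ : 0 < θ)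
    (h : ℕ → ℕ) {k P : ℕ}
    (hh : ∀ i ∈ Icc 1 P, h i ≠ 0 → θ * ∑ s ∈ Icc 1 i, (h s : ℝ) * q s < prefixWork n q (i + 1)) :
    ∑ i ∈ Icc 1 P, (h i : ℝ) * prefixWork n q (i + 1) ^ k ≤ 2 ^ (k + 2) / θ * cost n q k P := by
  have hq₀ : ∀ i, 0 ≤ q i := fun i => (hq i).le
  have hx : ∀ i ∈ Icc 1 P, h i ≠ 0 → 0 < prefixWork n q (i + 1) := fun i hi hhi =>
    (mul_nonneg hθ.le (sum_nonneg fun s _ => mul_nonneg (Nat.cast_nonneg _) (hq₀ s))).trans_lt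
      (hh i hi hhi)
  calc ∑ i ∈ Icc 1 P, (h i : ℝ) * prefixWork n q (i + 1) ^ k
      = ∑ i ∈ Icc 1 P with h i ≠ 0, (h i : ℝ) * prefixWork n q (i + 1) ^ k :=
        (sum_filter_of_ne fun i _ hne => by exact_mod_cast left_ne_zero_of_mul hne).symm
    _ ≤ ∑ i ∈ Icc 1 P with h i ≠ 0, ∑ t ∈ Icc 1 P, ∑ j ∈ Icc 1 (n t), charge n q k (h i) i t j :=
        sum_le_sum fun i hi => by
          obtain ⟨hiP, hhi⟩ := mem_filter.1 hi
          exact mul_pow_le_sum_charge hq₀ hmono k (mem_Icc.1 hiP).2 (Nat.cast_nonneg _)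
            (hx i hiP hhi)
    _ = ∑ t ∈ Icc 1 P, ∑ j ∈ Icc 1 (n t), ∑ i ∈ Icc 1 P with h i ≠ 0, charge n q k (h i) i t j := by
        rw [sum_comm]
        exact sum_congr rfl fun _ _ => sum_comm
    _ ≤ ∑ t ∈ Icc 1 P, ∑ j ∈ Icc 1 (n t), 2 ^ (k + 2) / θ * completion n q t j ^ k :=
        sum_le_sum fun t ht => sum_le_sum fun j hj =>
          sum_charge_le hq hθ h hh (mem_Icc.1 ht).1 hj
    _ = 2 ^ (k + 2) / θ * cost n q k P := by simp only [cost, mul_sum]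

theorem delayedCost_le (hq : ∀ i, 0 < q i) (hmono : Monotone q) (k P : ℕ) :
    delayedCost n m q k P
      ≤ 2⁻¹ * cost n q k P + ((2 : ℝ) ^ (2 * k + 3) + 1) ^ k * cost m q k P := by
  have hq₀ : ∀ i, 0 ≤ q i := fun i => (hq i).le
  set θ : ℝ := 2 ^ (2 * k + 3)
  have hθ : 1 ≤ θ := one_le_pow₀ one_le_two
  have hcharge := sum_mul_prefixWork_pow_le (k := k) (P := P) hq hmono (zero_lt_one.trans_le hθ)
    (heavyCount n m q θ) fun i hi =>
      mul_sum_heavyCount_lt hq₀ (zero_le_one.trans hθ) (mem_Icc.1 hi).1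
  calc delayedCost n m q k P
      ≤ ∑ i ∈ Icc 1 P, ∑ j ∈ Icc 1 (m i),
          ((if θ * completion m q i j < prefixWork n q (i + 1) then
              2 ^ k * prefixWork n q (i + 1) ^ k else 0)
            + ((θ + 1) * completion m q i j) ^ k) := by
        refine sum_le_sum fun i _ => sum_le_sum fun j _ => add_pow_le_ite_add
          (prefixWork_nonneg hq₀ _) (mul_nonneg (Nat.cast_nonneg _) (hq₀ i))
          (le_add_of_nonneg_left (prefixWork_nonneg hq₀ i)) hθ k
    _ = 2 ^ k * ∑ i ∈ Icc 1 P, (heavyCount n m q θ i : ℝ) * prefixWork n q (i + 1) ^ k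
          + (θ + 1) ^ k * cost m q k P := by
        simp only [sum_add_distrib, ← sum_filter, sum_const, nsmul_eq_mul, mul_pow, cost, mul_sum,
          heavyCount]
        congr 1
        exact sum_congr rfl fun i _ => by ring
    _ ≤ 2 ^ k * (2 ^ (k + 2) / θ * cost n q k P) + (θ + 1) ^ k * cost m q k P := by gcongr
    _ = 2⁻¹ * cost n q k P + (θ + 1) ^ k * cost m q k P := by
        simp only [θ]
        field_simp
        ring

end

end ClassSchedule

open ClassSchedule in
theorem stmt_16_general (k : ℕ) :
    ∃ lam : ℝ, ∀ (P : ℕ), 1 ≤ P → ∀ (n m : ℕ → ℕ) (q : ℕ → ℝ),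
      (∀ i ∈ Finset.Icc 1 P, 0 < q i) →
      (∀ i ∈ Finset.Icc 1 P, ∀ j ∈ Finset.Icc 1 P, i < j → q i < q j) →
      ∑ i ∈ Finset.Icc 1 P, ∑ j ∈ Finset.Icc 1 (m i),
          ((∑ t ∈ Finset.Icc 1 i, (n t : ℝ) * q t) + (j : ℝ) * q i) ^ k
        ≤ ((k + 1 : ℝ) / (k + 2)) *
            ∑ i ∈ Finset.Icc 1 P, ∑ j ∈ Finset.Icc 1 (n i),
              ((∑ t ∈ Finset.Ico 1 i, (n t : ℝ) * q t) + (j : ℝ) * q i) ^ k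
          + lam *
            ∑ i ∈ Finset.Icc 1 P, ∑ j ∈ Finset.Icc 1 (m i),
              ((∑ t ∈ Finset.Ico 1 i, (m t : ℝ) * q t) + (j : ℝ) * q i) ^ k := by
  refine ⟨((2 : ℝ) ^ (2 * k + 3) + 1) ^ k, fun P hP n m q hq hmono => ?_⟩
  obtain ⟨q', hq'mono, hq'pos, hq'q⟩ := exists_monotone_pos_eqOn hP hq
    (StrictMonoOn.monotoneOn fun i hi j hj => hmono i (mem_Icc.2 hi) j (mem_Icc.2 hj))
  have hhalf : (2⁻¹ : ℝ) ≤ (k + 1) / (k + 2) := by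
    rw [le_div_iff₀ (by positivity)]
    linarith [(k.cast_nonneg : (0 : ℝ) ≤ k)]
  have key : delayedCost n m q' k P ≤ (k + 1) / (k + 2) * cost n q' k P
      + ((2 : ℝ) ^ (2 * k + 3) + 1) ^ k * cost m q' k P :=
    (delayedCost_le hq'pos hq'mono k P).trans (by
      gcongr
      exact cost_nonneg (fun i => (hq'pos i).le) k P)
  rw [delayedCost_congr hq'q, cost_congr hq'q, cost_congr hq'q] at key
  simpa only [delayedCost, cost, completion, prefixWork, Ico_add_one_right_eq_Icc] using key

theorem stmt_16 (k : ℕ) (hk : 1 ≤ k) :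
    ∃ lam : ℝ, ∀ (P : ℕ), 1 ≤ P → ∀ (n m : ℕ → ℕ) (q : ℕ → ℝ),
      (∀ i ∈ Finset.Icc 1 P, 0 < q i) →
      (∀ i ∈ Finset.Icc 1 P, ∀ j ∈ Finset.Icc 1 P, i < j → q i < q j) →
      ∑ i ∈ Finset.Icc 1 P, ∑ j ∈ Finset.Icc 1 (m i),
          ((∑ t ∈ Finset.Icc 1 i, (n t : ℝ) * q t) + (j : ℝ) * q i) ^ k
        ≤ ((k + 1 : ℝ) / (k + 2)) *
            ∑ i ∈ Finset.Icc 1 P, ∑ j ∈ Finset.Icc 1 (n i),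
              ((∑ t ∈ Finset.Ico 1 i, (n t : ℝ) * q t) + (j : ℝ) * q i) ^ k
          + lam *
            ∑ i ∈ Finset.Icc 1 P, ∑ j ∈ Finset.Icc 1 (m i),
              ((∑ t ∈ Finset.Ico 1 i, (m t : ℝ) * q t) + (j : ℝ) * q i) ^ k :=
  stmt_16_general k
end

section
/- Let (a_j)_{j=1}^P and (b_j)_{j=1}^P be nonnegative reals with partial sums A_i = ∑_{j≤i} a_j and B_i = ∑_{j≤i} b_j. If for a positive integer k and constants μ, λ ≥ 0 the pointwise inequality B_i·(A_i + B_i)^k ≤ (μ/(k+1))·A_i^(k+1) + (λ/(k+1))·B_i^(k+1) holds for every i, then ∑_{j=1}^{i} b_j·(A_j + b_j)^k ≤ μ·∑_{j=1}^{i} a_j·A_j^k + λ·∑_{j=1}^{i} b_j·B_j^k for every 1 ≤ i ≤ P. -/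
/-!
Since `A_j + b_j ≤ A_i + B_i` for `j ≤ i`, the left-hand side is at most `B_i (A_i + B_i)^k`,
which the hypothesis bounds by `μ/(k+1) A_i^(k+1) + λ/(k+1) B_i^(k+1)`. Telescoping
`A_j^(k+1) - A_(j-1)^(k+1) ≤ (k+1) a_j A_j^k` gives `A_i^(k+1) ≤ (k+1) ∑_{j≤i} a_j A_j^k`,
and likewise for `B`.
-/

open Finset

theorem pow_succ_sub_pow_succ_le {x y : ℝ} (hy : 0 ≤ y) (hyx : y ≤ x) (n : ℕ) :
    x ^ (n + 1) - y ^ (n + 1) ≤ (n + 1) * (x - y) * x ^ n := by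
  have hx : 0 ≤ x := hy.trans hyx
  have hterm : ∀ i ∈ range (n + 1), x ^ i * y ^ (n + 1 - 1 - i) ≤ x ^ n := fun i hi => by
    have hin : i ≤ n := Nat.lt_succ_iff.mp (mem_range.mp hi)
    calc x ^ i * y ^ (n + 1 - 1 - i) ≤ x ^ i * x ^ (n - i) := by
          simp only [Nat.add_sub_cancel]
          gcongr
      _ = x ^ n := by rw [← pow_add, Nat.add_sub_cancel' hin]
  calc x ^ (n + 1) - y ^ (n + 1)
      = (∑ i ∈ range (n + 1), x ^ i * y ^ (n + 1 - 1 - i)) * (x - y) := (geom_sum₂_mul x y _).symm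
    _ ≤ (∑ _i ∈ range (n + 1), x ^ n) * (x - y) :=
        mul_le_mul_of_nonneg_right (sum_le_sum hterm) (sub_nonneg.mpr hyx)
    _ = (n + 1) * (x - y) * x ^ n := by
        rw [sum_const, card_range, nsmul_eq_mul]
        push_cast
        ring

theorem pow_sum_Icc_le_sum_mul_pow_partialSum (c : ℕ → ℝ) (k i : ℕ)
    (hc : ∀ j ∈ Icc 1 i, 0 ≤ c j) :
    (∑ j ∈ Icc 1 i, c j) ^ (k + 1) ≤ (k + 1) * ∑ j ∈ Icc 1 i, c j * (∑ t ∈ Icc 1 j, c t) ^ k := by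
  induction i with
  | zero => simp
  | succ i ih =>
    have hc' : ∀ j ∈ Icc 1 i, 0 ≤ c j := fun j hj =>
      hc j (Icc_subset_Icc_right (Nat.le_succ i) hj)
    have hci : 0 ≤ c (i + 1) := hc (i + 1) (right_mem_Icc.mpr (Nat.le_add_left 1 i))
    have hsplit : ∑ t ∈ Icc 1 (i + 1), c t = ∑ t ∈ Icc 1 i, c t + c (i + 1) :=
      sum_Icc_succ_top (Nat.le_add_left 1 i) c
    have hS : 0 ≤ ∑ t ∈ Icc 1 i, c t := sum_nonneg hc'
    have step := pow_succ_sub_pow_succ_le hS (le_add_of_nonneg_right hci) k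
    rw [sum_Icc_succ_top (Nat.le_add_left 1 i), sum_Icc_succ_top (Nat.le_add_left 1 i), hsplit]
    linarith [ih hc']

theorem sum_mul_pow_partialSum_add_le (a b : ℕ → ℝ) (k i : ℕ)
    (ha : ∀ j ∈ Icc 1 i, 0 ≤ a j) (hb : ∀ j ∈ Icc 1 i, 0 ≤ b j) :
    ∑ j ∈ Icc 1 i, b j * (∑ t ∈ Icc 1 j, a t + b j) ^ k
      ≤ (∑ j ∈ Icc 1 i, b j) * (∑ j ∈ Icc 1 i, a j + ∑ j ∈ Icc 1 i, b j) ^ k := by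
  rw [sum_mul]
  refine sum_le_sum fun j hj => mul_le_mul_of_nonneg_left ?_ (hb j hj)
  have hsub : Icc 1 j ⊆ Icc 1 i := Icc_subset_Icc_right (mem_Icc.mp hj).2
  exact pow_le_pow_left₀ (add_nonneg (sum_nonneg fun t ht => ha t (hsub ht)) (hb j hj))
    (add_le_add (sum_le_sum_of_subset_of_nonneg hsub fun t ht _ => ha t ht) (single_le_sum hb hj)) k

theorem div_mul_le_mul_of_le_mul {c m x y : ℝ} (hc : 0 ≤ c) (hm : 0 < m) (h : x ≤ m * y) :
    c / m * x ≤ c * y := by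
  calc c / m * x ≤ c / m * (m * y) := by gcongr
    _ = c * y := by field_simp

theorem stmt_17_general (P : ℕ) (a b : ℕ → ℝ)
    (ha : ∀ j ∈ Finset.Icc 1 P, 0 ≤ a j) (hb : ∀ j ∈ Finset.Icc 1 P, 0 ≤ b j)
    (k : ℕ) (μ lam : ℝ) (hμ : 0 ≤ μ) (hlam : 0 ≤ lam)
    (hpoint : ∀ i ∈ Finset.Icc 1 P,
      (∑ j ∈ Finset.Icc 1 i, b j) *
          ((∑ j ∈ Finset.Icc 1 i, a j) + (∑ j ∈ Finset.Icc 1 i, b j)) ^ k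
        ≤ (μ / (k + 1)) * (∑ j ∈ Finset.Icc 1 i, a j) ^ (k + 1)
          + (lam / (k + 1)) * (∑ j ∈ Finset.Icc 1 i, b j) ^ (k + 1)) :
    ∀ i ∈ Finset.Icc 1 P,
      ∑ j ∈ Finset.Icc 1 i, b j * ((∑ t ∈ Finset.Icc 1 j, a t) + b j) ^ k
        ≤ μ * ∑ j ∈ Finset.Icc 1 i, a j * (∑ t ∈ Finset.Icc 1 j, a t) ^ k
          + lam * ∑ j ∈ Finset.Icc 1 i, b j * (∑ t ∈ Finset.Icc 1 j, b t) ^ k := by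
  intro i hi
  have hsub : Icc 1 i ⊆ Icc 1 P := Icc_subset_Icc_right (mem_Icc.mp hi).2
  have ha' : ∀ j ∈ Icc 1 i, 0 ≤ a j := fun j hj => ha j (hsub hj)
  have hb' : ∀ j ∈ Icc 1 i, 0 ≤ b j := fun j hj => hb j (hsub hj)
  have hk : (0 : ℝ) < k + 1 := by positivity
  calc _ ≤ _ := sum_mul_pow_partialSum_add_le a b k i ha' hb'
    _ ≤ _ := hpoint i hi
    _ ≤ _ := add_le_add
        (div_mul_le_mul_of_le_mul hμ hk (pow_sum_Icc_le_sum_mul_pow_partialSum a k i ha'))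
        (div_mul_le_mul_of_le_mul hlam hk (pow_sum_Icc_le_sum_mul_pow_partialSum b k i hb'))

theorem stmt_17 (P : ℕ) (hP : 1 ≤ P) (a b : ℕ → ℝ)
    (ha : ∀ j ∈ Finset.Icc 1 P, 0 ≤ a j) (hb : ∀ j ∈ Finset.Icc 1 P, 0 ≤ b j)
    (k : ℕ) (hk : 1 ≤ k) (μ lam : ℝ) (hμ : 0 ≤ μ) (hlam : 0 ≤ lam)
    (hpoint : ∀ i ∈ Finset.Icc 1 P,
      (∑ j ∈ Finset.Icc 1 i, b j) *
          ((∑ j ∈ Finset.Icc 1 i, a j) + (∑ j ∈ Finset.Icc 1 i, b j)) ^ k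
        ≤ (μ / (k + 1)) * (∑ j ∈ Finset.Icc 1 i, a j) ^ (k + 1)
          + (lam / (k + 1)) * (∑ j ∈ Finset.Icc 1 i, b j) ^ (k + 1)) :
    ∀ i ∈ Finset.Icc 1 P,
      ∑ j ∈ Finset.Icc 1 i, b j * ((∑ t ∈ Finset.Icc 1 j, a t) + b j) ^ k
        ≤ μ * ∑ j ∈ Finset.Icc 1 i, a j * (∑ t ∈ Finset.Icc 1 j, a t) ^ k
          + lam * ∑ j ∈ Finset.Icc 1 i, b j * (∑ t ∈ Finset.Icc 1 j, b t) ^ k :=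
  stmt_17_general P a b ha hb k μ lam hμ hlam hpoint
end

section
/- Let N jobs have processing times q(z)-parametrized as follows: for fixed A ≥ 0 and reals q_h ≤ q_{h+1}, define q(z) = q_h + (q_{h+1} − q_h)·z for z ∈ [0,1], and g(z) = 2(k+1)·∑_{t=1}^{n} (A + t·q(z))^k − n·(A + n·q(z))^k for a positive integer n and positive integer k. Then g is nondecreasing on [0,1]; in particular 2(k+1)·∑_{t=1}^{n} t·(A + t·q)^{k−1} > n²·(A + n·q)^{k−1} for all q > 0. -/
/-!
Write `G q = 2(k+1) ∑_{t=1}^n (A + tq)^k - n (A + nq)^k`, so that `g = G ∘ q(·)` with `q(·)` affine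
and nondecreasing. Since `G' q = k (2(k+1) ∑ t (A + tq)^(k-1) - n² (A + nq)^(k-1))`, both claims
reduce to the inequality for `q > 0`. For `t ≤ n` and `A ≥ 0` we have `t (A + nq) ≤ n (A + tq)`,
hence `n^(k-1) · t (A + tq)^(k-1) ≥ t^k (A + nq)^(k-1)`; summing and using
`(k+1) ∑_{t=1}^n t^k ≥ n^(k+1)` (compare the sum with `∫₀ⁿ x^k dx`) gives
`(k+1) ∑ t (A + tq)^(k-1) ≥ n² (A + nq)^(k-1)`, and the factor `2` makes it strict.
-/

open Finset

theorem pow_succ_le_mul_sum_Icc_pow (n k : ℕ) :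
    (n : ℝ) ^ (k + 1) ≤ (k + 1) * ∑ t ∈ Icc 1 n, (t : ℝ) ^ k := by
  have hmono : MonotoneOn (fun x : ℝ => x ^ k) (Set.Icc 0 (0 + n)) :=
    fun x hx y _ hxy => pow_le_pow_left₀ hx.1 hxy k
  have hsum : ∑ t ∈ Icc 1 n, (t : ℝ) ^ k = ∑ i ∈ range n, ((0 : ℝ) + ↑(i + 1)) ^ k := by
    rw [← Ico_add_one_right_eq_Icc, sum_Ico_eq_sum_range]
    simp [add_comm]
  rw [hsum, ← div_le_iff₀' (by positivity)]
  simpa [integral_pow] using hmono.integral_le_sum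

theorem sq_mul_pow_le_mul_sum_Icc {A q : ℝ} (hA : 0 ≤ A) (hq : 0 ≤ q) (n m : ℕ) :
    (n : ℝ) ^ 2 * (A + n * q) ^ m ≤ (m + 2) * ∑ t ∈ Icc 1 n, (t : ℝ) * (A + t * q) ^ m := by
  rcases Nat.eq_zero_or_pos n with rfl | hn
  · simp
  have hterm : ∀ t ∈ Icc 1 n,
      (t : ℝ) ^ (m + 1) * (A + n * q) ^ m ≤ n ^ m * (t * (A + t * q) ^ m) := by
    intro t ht
    have htn : (t : ℝ) ≤ n := by exact_mod_cast (mem_Icc.1 ht).2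
    have hratio : (t : ℝ) * (A + n * q) ≤ n * (A + t * q) := by nlinarith
    calc (t : ℝ) ^ (m + 1) * (A + n * q) ^ m = t * (t * (A + n * q)) ^ m := by
          rw [mul_pow, pow_succ]; ring
      _ ≤ t * (n * (A + t * q)) ^ m := by gcongr
      _ = n ^ m * (t * (A + t * q) ^ m) := by rw [mul_pow]; ring
  have hscaled : (n : ℝ) ^ m * (n ^ 2 * (A + n * q) ^ m) ≤
      n ^ m * ((m + 2) * ∑ t ∈ Icc 1 n, (t : ℝ) * (A + t * q) ^ m) :=
    calc (n : ℝ) ^ m * (n ^ 2 * (A + n * q) ^ m) = n ^ (m + 1 + 1) * (A + n * q) ^ m := by ring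
      _ ≤ ((m + 1 : ℕ) + 1) * (∑ t ∈ Icc 1 n, (t : ℝ) ^ (m + 1)) * (A + n * q) ^ m := by
          gcongr; exact pow_succ_le_mul_sum_Icc_pow n (m + 1)
      _ = (m + 2) * ∑ t ∈ Icc 1 n, (t : ℝ) ^ (m + 1) * (A + n * q) ^ m := by
          rw [mul_assoc, sum_mul]; push_cast; ring
      _ ≤ (m + 2) * ∑ t ∈ Icc 1 n, (n : ℝ) ^ m * (t * (A + t * q) ^ m) := by
          gcongr ?_ * ?_; exact sum_le_sum hterm
      _ = n ^ m * ((m + 2) * ∑ t ∈ Icc 1 n, (t : ℝ) * (A + t * q) ^ m) := by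
          rw [← mul_sum]; ring
  exact le_of_mul_le_mul_left hscaled (by positivity)

theorem sq_mul_pow_lt_two_mul_sum_Icc {A q : ℝ} (hA : 0 ≤ A) (hq : 0 < q) {n k : ℕ}
    (hn : 1 ≤ n) (hk : 1 ≤ k) :
    (n : ℝ) ^ 2 * (A + n * q) ^ (k - 1) <
      2 * (k + 1 : ℝ) * ∑ t ∈ Icc 1 n, (t : ℝ) * (A + t * q) ^ (k - 1) := by
  obtain ⟨m, rfl⟩ : ∃ m, k = m + 1 := ⟨k - 1, by omega⟩
  have hle := sq_mul_pow_le_mul_sum_Icc hA hq.le n m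
  have hpos : 0 < (n : ℝ) ^ 2 * (A + n * q) ^ m := by
    have : (0 : ℝ) < n := by exact_mod_cast hn
    positivity
  simp only [Nat.add_sub_cancel, Nat.cast_add, Nat.cast_one]
  linarith

def powerSumGap (A : ℝ) (n k : ℕ) (q : ℝ) : ℝ :=
  2 * (k + 1 : ℝ) * ∑ t ∈ Icc 1 n, (A + (t : ℝ) * q) ^ k - (n : ℝ) * (A + (n : ℝ) * q) ^ k

theorem hasDerivAt_powerSumGap (A : ℝ) (n k : ℕ) (q : ℝ) :
    HasDerivAt (powerSumGap A n k)
      (k * (2 * (k + 1 : ℝ) * ∑ t ∈ Icc 1 n, (t : ℝ) * (A + t * q) ^ (k - 1)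
        - (n : ℝ) ^ 2 * (A + n * q) ^ (k - 1))) q := by
  have hterm (t : ℕ) : HasDerivAt (fun x : ℝ => (A + t * x) ^ k)
      (k * (A + t * q) ^ (k - 1) * t) q := by
    simpa using (((hasDerivAt_id q).const_mul (t : ℝ)).const_add A).fun_pow k
  refine (((HasDerivAt.fun_sum fun t _ => hterm t).const_mul (2 * (k + 1 : ℝ))).sub
    ((hterm n).const_mul (n : ℝ))).congr_deriv ?_
  rw [mul_sub, mul_sum, mul_sum, mul_sum]
  congr 1
  · exact sum_congr rfl fun t _ => by ring
  · ring

theorem monotoneOn_powerSumGap {A : ℝ} (hA : 0 ≤ A) {n k : ℕ} (hn : 1 ≤ n) (hk : 1 ≤ k) :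
    MonotoneOn (powerSumGap A n k) (Set.Ici 0) := by
  refine monotoneOn_of_deriv_nonneg (convex_Ici 0)
    (fun q _ => (hasDerivAt_powerSumGap A n k q).continuousAt.continuousWithinAt)
    (fun q _ => (hasDerivAt_powerSumGap A n k q).differentiableAt.differentiableWithinAt)
    fun q hq => ?_
  rw [interior_Ici] at hq
  rw [(hasDerivAt_powerSumGap A n k q).deriv]
  exact mul_nonneg k.cast_nonneg (sub_nonneg.2 (sq_mul_pow_lt_two_mul_sum_Icc hA hq hn hk).le)

theorem stmt_18 (A : ℝ) (hA : 0 ≤ A) (qh qh1 : ℝ) (hq : 0 < qh) (hqq : qh ≤ qh1)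
    (n k : ℕ) (hn : 1 ≤ n) (hk : 1 ≤ k) :
    MonotoneOn (fun z : ℝ =>
        2 * (k + 1 : ℝ) * ∑ t ∈ Finset.Icc 1 n,
            (A + (t : ℝ) * (qh + (qh1 - qh) * z)) ^ k
          - (n : ℝ) * (A + (n : ℝ) * (qh + (qh1 - qh) * z)) ^ k)
      (Set.Icc 0 1) ∧
    ∀ q : ℝ, 0 < q →
      2 * (k + 1 : ℝ) * ∑ t ∈ Finset.Icc 1 n, (t : ℝ) * (A + (t : ℝ) * q) ^ (k - 1)
        > (n : ℝ) ^ 2 * (A + (n : ℝ) * q) ^ (k - 1) := by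
  have hinterp : Monotone fun z : ℝ => qh + (qh1 - qh) * z := fun x y hxy => by
    have : 0 ≤ qh1 - qh := sub_nonneg.2 hqq
    dsimp only
    gcongr
  have hmaps : Set.MapsTo (fun z : ℝ => qh + (qh1 - qh) * z) (Set.Icc 0 1) (Set.Ici 0) :=
    fun z hz => hq.le.trans (by simpa using hinterp hz.1)
  exact ⟨(monotoneOn_powerSumGap hA hn hk).comp (hinterp.monotoneOn _) hmaps,
    fun q hq => sq_mul_pow_lt_two_mul_sum_Icc hA hq hn hk⟩
end

section
/- In the scheduling game under the SPT policy with n jobs on one machine, for any assignment the ℓ_k-norm of completion times under the EQUI policy is at most (2k+2)^(1/k) times that under SPT. Concretely: let n_1,…,n_h be positive integers and 0 < q_1 < … < q_h. Then (2k+2)·∑_{j=1}^{h} ∑_{t=1}^{n_j} (∑_{b<j} n_b·q_b + t·q_j)^k ≥ 2·∑_{j=1}^{h} n_j·(∑_{b<j} n_b·q_b + (∑_{b≥j} n_b)·q_j)^k for every positive integer k. -/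
/-!
Let `A j` (`sptStart`) be the time at which SPT starts class `j`, and
`G j = ∑_{i ≤ k} A (j+1)^i A j^(k-i)`, so that `n j q j G j = A (j+1)^(k+1) - A j^(k+1)`.
Comparing with `∫ x^k dx` on `[A j, A (j+1)]` gives `n j G j ≤ (k+1) ∑_{t ≤ n j} (A j + t q j)^k`,
i.e. `∑ j, n j G j` is at most `k + 1` times the SPT cost.

The EQUI cost is at most `∑ j, n j G j`, by induction on the number of classes. Appending class
`h + 1` delays each earlier class `j` by `n (h+1) q j`, from a completion time at most `A (h+1)`
(monotonicity of `q`) to one at most `A (h+2)`. Since `x^k - y^k ≤ (x - y) ∑_{i<k} x'^i y'^(k-1-i)`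
for `0 ≤ y ≤ x ≤ x'`, `y ≤ y'`, and `∑_{j ≤ h} n j q j = A (h+1)`, the total extra cost is at most
`n (h+1) A (h+1) ∑_{i<k} A (h+2)^i A (h+1)^(k-1-i)`; adding the new class's own cost
`n (h+1) A (h+2)^k` gives exactly `n (h+1) G (h+1)`.
-/

open Finset

section OrderedRing

variable {R : Type*} [CommRing R] [LinearOrder R] [IsStrictOrderedRing R]

theorem pow_sub_pow_le_mul_geom_sum₂ {x y x' y' : R} (hy : 0 ≤ y) (hyx : y ≤ x) (hxx' : x ≤ x')
    (hyy' : y ≤ y') (n : ℕ) :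
    x ^ n - y ^ n ≤ (x - y) * ∑ i ∈ range n, x' ^ i * y' ^ (n - 1 - i) := by
  have hx : 0 ≤ x := hy.trans hyx
  rw [← geom_sum₂_mul, mul_comm]
  gcongr
  exact pow_nonneg (hx.trans hxx') _

theorem pow_succ_sub_pow_succ_le_mul_sum_pow {a q : R} (ha : 0 ≤ a) (hq : 0 ≤ q) (k m : ℕ) :
    (a + m * q) ^ (k + 1) - a ^ (k + 1) ≤ q * ((k + 1) * ∑ t ∈ Icc 1 m, (a + t * q) ^ k) := by
  induction m with
  | zero => simp
  | succ m ih =>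
    have hstep : (a + (m + 1 : ℕ) * q) ^ (k + 1) - (a + m * q) ^ (k + 1)
        ≤ q * ((k + 1) * (a + (m + 1 : ℕ) * q) ^ k) := by
      have hle : a + m * q ≤ a + (m + 1 : ℕ) * q := by push_cast; linarith
      have := pow_sub_pow_le_mul_geom_sum₂ (by positivity) hle le_rfl hle (k + 1)
      rwa [geom_sum₂_self, add_sub_add_left_eq_sub, ← sub_mul, Nat.cast_succ, add_sub_cancel_left,
        one_mul, Nat.add_sub_cancel, Nat.cast_succ, ← Nat.cast_succ] at this
    rw [sum_Icc_succ_top (by omega)]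
    linear_combination ih + hstep

theorem natCast_mul_geom_sum₂_le_sum_pow {a q : R} (ha : 0 ≤ a) (hq : 0 < q) (k m : ℕ) :
    m * ∑ i ∈ range (k + 1), (a + m * q) ^ i * a ^ (k - i)
      ≤ (k + 1) * ∑ t ∈ Icc 1 m, (a + t * q) ^ k := by
  refine le_of_mul_le_mul_left ?_ hq
  have hgeom := geom_sum₂_mul (a + m * q) a (k + 1)
  rw [Nat.add_sub_cancel, add_sub_cancel_left] at hgeom
  calc q * (m * ∑ i ∈ range (k + 1), (a + m * q) ^ i * a ^ (k - i))
      = (a + m * q) ^ (k + 1) - a ^ (k + 1) := by rw [← hgeom]; ring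
    _ ≤ _ := pow_succ_sub_pow_succ_le_mul_sum_pow ha hq.le k m

end OrderedRing

section Scheduling

variable (n : ℕ → ℕ) (q : ℕ → ℝ)

def sptStart (j : ℕ) : ℝ := ∑ b ∈ Ico 1 j, (n b : ℝ) * q b

def equiCompletion (h j : ℕ) : ℝ := sptStart n q j + (∑ b ∈ Icc j h, (n b : ℝ)) * q j

variable {n q}

theorem sptStart_succ {j : ℕ} (hj : 1 ≤ j) : sptStart n q (j + 1) = sptStart n q j + n j * q j :=
  sum_Ico_succ_top hj _

theorem sptStart_nonneg {h j : ℕ} (hq : ∀ b ∈ Icc 1 h, 0 ≤ q b) (hj : j ≤ h + 1) :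
    0 ≤ sptStart n q j :=
  sum_nonneg fun b hb => mul_nonneg (n b).cast_nonneg (hq b (by simp at hb ⊢; omega))

theorem equiCompletion_self {j : ℕ} (hj : 1 ≤ j) :
    equiCompletion n q j j = sptStart n q (j + 1) := by
  simp [equiCompletion, sptStart_succ hj]

theorem equiCompletion_succ {h j : ℕ} (hj : j ≤ h + 1) :
    equiCompletion n q (h + 1) j = equiCompletion n q h j + n (h + 1) * q j := by
  rw [equiCompletion, equiCompletion, sum_Icc_succ_top hj]; ring

theorem equiCompletion_le_sptStart {h j : ℕ} (hmono : MonotoneOn q (Set.Icc 1 h))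
    (hj : j ∈ Icc 1 h) : equiCompletion n q h j ≤ sptStart n q (h + 1) := by
  obtain ⟨hj1, hjh⟩ := mem_Icc.1 hj
  unfold equiCompletion sptStart
  rw [← sum_Ico_consecutive _ hj1 (by omega : j ≤ h + 1), sum_mul,
    ← Ico_add_one_right_eq_Icc]
  gcongr with b hb
  obtain ⟨hjb, hbh⟩ := mem_Ico.1 hb
  exact hmono ⟨hj1, hjh⟩ ⟨by omega, by omega⟩ hjb

theorem equiCompletion_nonneg {h j : ℕ} (hq : ∀ b ∈ Icc 1 h, 0 ≤ q b) (hj : j ∈ Icc 1 h) :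
    0 ≤ equiCompletion n q h j :=
  add_nonneg (sptStart_nonneg hq (by simp at hj; omega))
    (mul_nonneg (sum_nonneg fun _ _ => by positivity) (hq j hj))

theorem equiCompletion_succ_pow_le {h j : ℕ} (hq : ∀ b ∈ Icc 1 (h + 1), 0 ≤ q b)
    (hmono : MonotoneOn q (Set.Icc 1 (h + 1))) (hj : j ∈ Icc 1 h) (k : ℕ) :
    equiCompletion n q (h + 1) j ^ k ≤ equiCompletion n q h j ^ k + n (h + 1) * q j *
      ∑ i ∈ range k, sptStart n q (h + 2) ^ i * sptStart n q (h + 1) ^ (k - 1 - i) := by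
  obtain ⟨hj1, hjh⟩ := mem_Icc.1 hj
  have hj' : j ∈ Icc 1 (h + 1) := mem_Icc.2 ⟨hj1, by omega⟩
  have hdelay : 0 ≤ n (h + 1) * q j := mul_nonneg (n (h + 1)).cast_nonneg (hq j hj')
  have hlate := equiCompletion_le_sptStart (n := n) hmono hj'
  rw [equiCompletion_succ (by omega)] at hlate ⊢
  have := pow_sub_pow_le_mul_geom_sum₂
    (equiCompletion_nonneg (fun b hb => hq b (by simp at hb ⊢; omega)) hj)
    (le_add_of_nonneg_right hdelay) hlate
    (equiCompletion_le_sptStart (hmono.mono (Set.Icc_subset_Icc_right (by omega))) hj) k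
  rw [add_sub_cancel_left] at this
  linarith

theorem sum_mul_equiCompletion_pow_le {h : ℕ} (hq : ∀ j ∈ Icc 1 h, 0 ≤ q j)
    (hmono : MonotoneOn q (Set.Icc 1 h)) (k : ℕ) :
    ∑ j ∈ Icc 1 h, n j * equiCompletion n q h j ^ k
      ≤ ∑ j ∈ Icc 1 h, n j *
          ∑ i ∈ range (k + 1), sptStart n q (j + 1) ^ i * sptStart n q j ^ (k - i) := by
  induction h with
  | zero => simp
  | succ h ih =>
    rw [sum_Icc_succ_top (by omega), sum_Icc_succ_top (by omega), equiCompletion_self (by omega),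
      geom_sum₂_succ_eq]
    set S := sptStart n q (h + 1) with hS
    set T := sptStart n q (h + 1 + 1)
    set g := ∑ i ∈ range k, T ^ i * S ^ (k - 1 - i)
    have hdelays : ∑ j ∈ Icc 1 h, (n j : ℝ) * (n (h + 1) * q j * g) = n (h + 1) * (S * g) := by
      rw [hS, sptStart, Ico_add_one_right_eq_Icc, sum_mul, mul_sum]
      exact sum_congr rfl fun _ _ => by ring
    calc ∑ j ∈ Icc 1 h, n j * equiCompletion n q (h + 1) j ^ k + n (h + 1) * T ^ k
        ≤ ∑ j ∈ Icc 1 h, n j * (equiCompletion n q h j ^ k + n (h + 1) * q j * g)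
            + n (h + 1) * T ^ k := by
          gcongr with j hj
          exact equiCompletion_succ_pow_le hq hmono hj k
      _ = ∑ j ∈ Icc 1 h, n j * equiCompletion n q h j ^ k + n (h + 1) * (T ^ k + S * g) := by
        simp only [mul_add, sum_add_distrib, hdelays]
        ring
      _ ≤ _ := by
        gcongr ?_ + _
        exact ih (fun j hj => hq j (mem_Icc.2 (by simp at hj; omega)))
          (hmono.mono (Set.Icc_subset_Icc_right (by omega)))

end Scheduling

theorem stmt_19_general (h k : ℕ) (n : ℕ → ℕ) (q : ℕ → ℝ)
    (hq : ∀ j ∈ Finset.Icc 1 h, 0 < q j)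
    (hqmono : ∀ i ∈ Finset.Icc 1 h, ∀ j ∈ Finset.Icc 1 h, i < j → q i < q j) :
    (2 * (k : ℝ) + 2) * ∑ j ∈ Finset.Icc 1 h, ∑ t ∈ Finset.Icc 1 (n j),
        ((∑ b ∈ Finset.Ico 1 j, (n b : ℝ) * q b) + (t : ℝ) * q j) ^ k
      ≥ 2 * ∑ j ∈ Finset.Icc 1 h, (n j : ℝ) *
          ((∑ b ∈ Finset.Ico 1 j, (n b : ℝ) * q b)
            + (∑ b ∈ Finset.Icc j h, (n b : ℝ)) * q j) ^ k := by
  have hq₀ : ∀ j ∈ Icc 1 h, 0 ≤ q j := fun j hj => (hq j hj).le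
  have hmono : MonotoneOn q (Set.Icc 1 h) := StrictMonoOn.monotoneOn
    fun i hi j hj hij => hqmono i (by simpa using hi) j (by simpa using hj) hij
  have hequi := sum_mul_equiCompletion_pow_le (n := n) hq₀ hmono k
  have hspt : ∑ j ∈ Icc 1 h, n j *
        ∑ i ∈ range (k + 1), sptStart n q (j + 1) ^ i * sptStart n q j ^ (k - i)
      ≤ (k + 1) * ∑ j ∈ Icc 1 h, ∑ t ∈ Icc 1 (n j), (sptStart n q j + t * q j) ^ k := by
    rw [mul_sum]
    refine sum_le_sum fun j hj => ?_
    rw [sptStart_succ (mem_Icc.1 hj).1]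
    exact natCast_mul_geom_sum₂_le_sum_pow
      (sptStart_nonneg hq₀ (by simp at hj; omega)) (hq j hj) k (n j)
  unfold equiCompletion sptStart at hequi hspt
  linarith

theorem stmt_19 (h k : ℕ) (hh : 1 ≤ h) (hk : 1 ≤ k) (n : ℕ → ℕ) (q : ℕ → ℝ)
    (hn : ∀ j ∈ Finset.Icc 1 h, 1 ≤ n j)
    (hq : ∀ j ∈ Finset.Icc 1 h, 0 < q j)
    (hqmono : ∀ i ∈ Finset.Icc 1 h, ∀ j ∈ Finset.Icc 1 h, i < j → q i < q j) :
    (2 * (k : ℝ) + 2) * ∑ j ∈ Finset.Icc 1 h, ∑ t ∈ Finset.Icc 1 (n j),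
        ((∑ b ∈ Finset.Ico 1 j, (n b : ℝ) * q b) + (t : ℝ) * q j) ^ k
      ≥ 2 * ∑ j ∈ Finset.Icc 1 h, (n j : ℝ) *
          ((∑ b ∈ Finset.Ico 1 j, (n b : ℝ) * q b)
            + (∑ b ∈ Finset.Icc j h, (n b : ℝ)) * q j) ^ k :=
  stmt_19_general h k n q hq hqmono
end
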